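/- arXiv:1901.06453 — 8 statements merged into one kernel-verified Lean document; each statement's English description precedes it below -/
import Mathlib

section
/- Let n ≥ 1 and let X, R ∈ ℂ^{n×n}. For every s1, s2 ∈ {−(n−1), ..., 0}, the cross-correlation of X with R satisfies C_{[X,R]}(s1, s2) = A_{[X,R]}(s1, s2 − n), where A_{[X,R]} is the autocorrelation of the horizontally concatenated signal [X,R] ∈ ℂ^{n×2n}. In other words, the top-left n×n quadrant of the cross-correlation C_{[X,R]} appears as an explicit segment of the autocorrelation of the composite signal. -/
open Complex MeasureTheory ProbabilityTheory Matrix ComplexConjugate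
open scoped Kronecker

noncomputable section

/-- Zero-extension of a matrix to integer indices: out-of-range entries are `0`. -/
def zext {n1 n2 : ℕ} (X : Matrix (Fin n1) (Fin n2) ℂ) (t1 t2 : ℤ) : ℂ :=
  if h : 0 ≤ t1 ∧ t1 < (n1 : ℤ) ∧ 0 ≤ t2 ∧ t2 < (n2 : ℤ) then
    X ⟨t1.toNat, by omega⟩ ⟨t2.toNat, by omega⟩
  else 0

/-- Cross-correlation `C_{[X1,X2]}(s1,s2)`, with out-of-range terms taken as `0`. -/
def crossCorr {n1 n2 : ℕ} (X1 X2 : Matrix (Fin n1) (Fin n2) ℂ) (s1 s2 : ℤ) : ℂ :=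
  ∑ t1 : Fin n1, ∑ t2 : Fin n2,
    X1 t1 t2 * conj (zext X2 (((t1 : ℕ) : ℤ) - s1) (((t2 : ℕ) : ℤ) - s2))

/-- Autocorrelation `A_X = C_{[X,X]}`. -/
def autocorr {n1 n2 : ℕ} (X : Matrix (Fin n1) (Fin n2) ℂ) : ℤ → ℤ → ℂ :=
  crossCorr X X

/-- Horizontal concatenation `[X, R]` of two `n × n` matrices. -/
def hcat {n : ℕ} (X R : Matrix (Fin n) (Fin n) ℂ) : Matrix (Fin n) (Fin (2 * n)) ℂ :=
  Matrix.of fun t1 t2 =>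
    if h : (t2 : ℕ) < n then X t1 ⟨t2, h⟩ else R t1 ⟨(t2 : ℕ) - n, by omega⟩

/-- The size `m1 × m2` oversampled discrete Fourier transform of an `n1 × n2` signal. -/
def dft2 {n1 n2 : ℕ} (m1 m2 : ℕ) (Z : Matrix (Fin n1) (Fin n2) ℂ) (k1 k2 : ℕ) : ℂ :=
  ∑ t1 : Fin n1, ∑ t2 : Fin n2,
    Z t1 t2 * Complex.exp (-(2 * (Real.pi : ℂ) * Complex.I) *
      (((t1 : ℕ) : ℂ) * (k1 : ℂ) / (m1 : ℂ) + ((t2 : ℕ) : ℂ) * (k2 : ℂ) / (m2 : ℂ)))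

/-- Quadrant cross-correlation `C°_{[X,R]}(i,j) = C_{[X,R]}(i-(n-1), j-(n-1))`. -/
def quadCC {n : ℕ} (X R : Matrix (Fin n) (Fin n) ℂ) : Matrix (Fin n) (Fin n) ℂ :=
  Matrix.of fun i j =>
    crossCorr X R (((i : ℕ) : ℤ) - ((n : ℤ) - 1)) (((j : ℕ) : ℤ) - ((n : ℤ) - 1))

/-- Columnwise vectorization: the pair `(j, i)` (column `j`, row `i`) indexes entry `X i j`. -/
def vecM {a b : ℕ} (X : Matrix (Fin a) (Fin b) ℂ) : Fin b × Fin a → ℂ :=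
  fun p => X p.2 p.1

/-- The matrix `M_R` satisfying `vec (C°_{[X,R]}) = M_R • vec X` (columnwise vectorization). -/
def MR {n : ℕ} (R : Matrix (Fin n) (Fin n) ℂ) :
    Matrix (Fin n × Fin n) (Fin n × Fin n) ℂ :=
  Matrix.of fun p q =>
    conj (zext R (((q.2 : ℕ) : ℤ) - ((p.2 : ℕ) : ℤ) + ((n : ℤ) - 1))
      (((q.1 : ℕ) : ℤ) - ((p.1 : ℕ) : ℤ) + ((n : ℤ) - 1)))

/-- `P1 · F_LA^*`: row `t ∈ {0,…,n-1}` corresponds to the column `t - (n-1)` of `F_LA`. -/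
def P1FLA (n m : ℕ) : Matrix (Fin n) (Fin m) ℂ :=
  Matrix.of fun t k =>
    Complex.exp ((2 * (Real.pi : ℂ) * Complex.I) * ((k : ℕ) : ℂ) *
      (((t : ℕ) : ℂ) - ((n : ℂ) - 1)) / (m : ℂ))

/-- `P2 · F_RA^*`: row `t ∈ {0,…,n-1}` corresponds to the column `t - (2n-1)` of `F_RA`. -/
def P2FRA (n m : ℕ) : Matrix (Fin n) (Fin m) ℂ :=
  Matrix.of fun t k =>
    Complex.exp ((2 * (Real.pi : ℂ) * Complex.I) * ((k : ℕ) : ℂ) *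
      (((t : ℕ) : ℂ) - (2 * (n : ℂ) - 1)) / (m : ℂ))

/-- The referenced-deconvolution matrix
`T_R = (1/m²) · M_R⁻¹ · [(P2 F_RA^*) ⊗ (P1 F_LA^*)]`. -/
def TR {n : ℕ} (m : ℕ) (R : Matrix (Fin n) (Fin n) ℂ) :
    Matrix (Fin n × Fin n) (Fin m × Fin m) ℂ :=
  ((m : ℂ) ^ 2)⁻¹ • ((MR R)⁻¹ * (P2FRA n m ⊗ₖ P1FLA n m))

/-- The reference scaling factor: `S_R(k1,k2)` is the squared ℓ²-norm of the column of `T_R`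
indexed by the pair `(k1, k2)` (i.e. column `m·k1 + k2`). -/
def SR {n : ℕ} (m : ℕ) (R : Matrix (Fin n) (Fin n) ℂ) (k1 k2 : Fin m) : ℝ :=
  ∑ p : Fin n × Fin n, ‖TR m R p (k1, k2)‖ ^ 2

/-- Lower-triangular all-ones matrix `1_L`. -/
def oneL (n : ℕ) : Matrix (Fin n) (Fin n) ℂ :=
  Matrix.of fun i j => if j ≤ i then 1 else 0

/-- First-order difference matrix `D_n` (the inverse of `1_L`). -/
def Dmat (n : ℕ) : Matrix (Fin n) (Fin n) ℂ :=
  Matrix.of fun i j => if i = j then 1 else if (j : ℕ) + 1 = (i : ℕ) then -1 else 0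

/-- Pinhole reference. -/
def pinholeRef (n : ℕ) : Matrix (Fin n) (Fin n) ℂ :=
  Matrix.of fun t1 t2 => if (t1 : ℕ) = n - 1 ∧ (t2 : ℕ) = n - 1 then 1 else 0

/-- Slit reference. -/
def slitRef (n : ℕ) : Matrix (Fin n) (Fin n) ℂ :=
  Matrix.of fun _ t2 => if (t2 : ℕ) = n - 1 then 1 else 0

/-- Block reference. -/
def blockRef (n : ℕ) : Matrix (Fin n) (Fin n) ℂ :=
  Matrix.of fun _ _ => 1

lemma zext_apply {n1 n2 : ℕ} (X : Matrix (Fin n1) (Fin n2) ℂ) (t1 : Fin n1) (t2 : Fin n2) :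
    zext X ((t1 : ℕ) : ℤ) ((t2 : ℕ) : ℤ) = X t1 t2 := by
  unfold zext
  rw [dif_pos]
  · congr 1 <;> exact Fin.ext (by simp)
  · refine ⟨by positivity, ?_, by positivity, ?_⟩ <;> exact_mod_cast (by simp [t1.isLt, t2.isLt])

lemma zext_hcat_shift {n : ℕ} (X R : Matrix (Fin n) (Fin n) ℂ) (a b : ℤ) (hb : 0 ≤ b) :
    zext (hcat X R) a (b + (n : ℤ)) = if b < (n : ℤ) then zext R a b else 0 := by
  unfold zext hcat
  by_cases hbn : b < (n : ℤ)
  · rw [if_pos hbn]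
    by_cases ha : 0 ≤ a ∧ a < (n : ℤ)
    · rw [dif_pos ⟨ha.1, by omega, by omega, by push_cast; omega⟩,
        dif_pos ⟨ha.1, ha.2, hb, hbn⟩]
      simp only [Matrix.of_apply]
      rw [dif_neg (by omega)]
      congr 1
      exact Fin.ext (by simp; omega)
    · rw [dif_neg (by omega), dif_neg (by omega)]
  · rw [if_neg hbn, dif_neg (by push_cast; omega)]

/-- For `s1, s2 ∈ {-(n-1),…,0}`, the cross-correlation of `X` with `R` satisfies
`C_{[X,R]}(s1, s2) = A_{[X,R]}(s1, s2 - n)`, where `A_{[X,R]}` is the autocorrelation of the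
horizontally concatenated signal `[X,R]`. -/
theorem cross_correlation_eq_autocorrelation_segment
    (n : ℕ) (hn : 1 ≤ n) (X R : Matrix (Fin n) (Fin n) ℂ) (s1 s2 : ℤ)
    (hs1l : -((n : ℤ) - 1) ≤ s1) (hs1u : s1 ≤ 0)
    (hs2l : -((n : ℤ) - 1) ≤ s2) (hs2u : s2 ≤ 0) :
    crossCorr X R s1 s2 = autocorr (hcat X R) s1 (s2 - (n : ℤ)) := by
  unfold autocorr crossCorr
  refine Finset.sum_congr rfl fun t1 _ => ?_
  -- rewrite entries via zext and move to sums over ranges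
  have hL : ∀ t2 : Fin n, X t1 t2 * conj (zext R (((t1 : ℕ) : ℤ) - s1) (((t2 : ℕ) : ℤ) - s2))
      = (fun k : ℕ => zext X ((t1 : ℕ) : ℤ) (k : ℤ) *
          conj (zext R (((t1 : ℕ) : ℤ) - s1) ((k : ℤ) - s2))) (t2 : ℕ) := by
    intro t2; simp [zext_apply]
  have hR : ∀ t2 : Fin (2 * n),
      hcat X R t1 t2 * conj (zext (hcat X R) (((t1 : ℕ) : ℤ) - s1)
        (((t2 : ℕ) : ℤ) - (s2 - (n : ℤ))))
      = (fun k : ℕ => zext (hcat X R) ((t1 : ℕ) : ℤ) (k : ℤ) *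
          conj (zext (hcat X R) (((t1 : ℕ) : ℤ) - s1) ((k : ℤ) - (s2 - (n : ℤ))))) (t2 : ℕ) := by
    intro t2; simp [zext_apply]
  rw [Finset.sum_congr rfl fun t2 _ => hL t2, Finset.sum_congr rfl fun t2 _ => hR t2,
    Fin.sum_univ_eq_sum_range (fun k : ℕ => zext X ((t1 : ℕ) : ℤ) (k : ℤ) *
      conj (zext R (((t1 : ℕ) : ℤ) - s1) ((k : ℤ) - s2))) n,
    Fin.sum_univ_eq_sum_range (fun k : ℕ => zext (hcat X R) ((t1 : ℕ) : ℤ) (k : ℤ) *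
      conj (zext (hcat X R) (((t1 : ℕ) : ℤ) - s1) ((k : ℤ) - (s2 - (n : ℤ))))) (2 * n)]
  rw [← Finset.sum_subset (Finset.range_subset_range.2 (by omega : n ≤ 2 * n))]
  · refine Finset.sum_congr rfl fun k hk => ?_
    have hk' : k < n := Finset.mem_range.1 hk
    have he : ((k : ℤ)) - (s2 - (n : ℤ)) = ((k : ℤ) - s2) + (n : ℤ) := by ring
    by_cases hc : (k : ℤ) - s2 < (n : ℤ)
    swap
    · rw [he, zext_hcat_shift X R _ _ (by omega), if_neg hc]
      have h0 : zext R (((t1 : ℕ) : ℤ) - s1) ((k : ℤ) - s2) = 0 := by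
        unfold zext; rw [dif_neg (by omega)]
      rw [h0]
      simp
    rw [he, zext_hcat_shift X R _ _ (by omega), if_pos hc]
    congr 1
    -- zext X on left columns equals zext (hcat X R)
    unfold zext hcat
    rw [dif_pos ⟨by positivity, by exact_mod_cast t1.isLt, by positivity, by exact_mod_cast hk'⟩,
      dif_pos ⟨by positivity, by exact_mod_cast t1.isLt, by positivity, by push_cast; omega⟩]
    simp only [Matrix.of_apply]
    rw [dif_pos (show (((k : ℤ).toNat : ℕ)) < n by simpa using hk')]
  · intro k hk hk'
    have h1 : n ≤ k := by simpa using hk'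
    have h2 : k < 2 * n := Finset.mem_range.1 hk
    have he : ((k : ℤ)) - (s2 - (n : ℤ)) = ((k : ℤ) - s2) + (n : ℤ) := by ring
    rw [he, zext_hcat_shift X R _ _ (by omega), if_neg (by push_cast; omega)]
    simp
end
end

section
/- Let n ≥ 1 and R ∈ ℂ^{n×n}. The linear map ℂ^{n×n} → ℂ^{n×n} sending X to the quadrant cross-correlation C°_{[X,R]} (equivalently, the matrix M_R ∈ ℂ^{n²×n²} representing this map under columnwise vectorization) is invertible if and only if R(n−1, n−1) ≠ 0. -/
open Complex MeasureTheory ProbabilityTheory Matrix ComplexConjugate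
open scoped Kronecker

noncomputable section

-- aux matrix
def Mrow {n : ℕ} (R : Matrix (Fin n) (Fin n) ℂ) :
    Matrix (Fin n × Fin n) (Fin n × Fin n) ℂ :=
  Matrix.of fun p q =>
    conj (zext R (((q.1 : ℕ) : ℤ) - ((p.1 : ℕ) : ℤ) + ((n : ℤ) - 1))
      (((q.2 : ℕ) : ℤ) - ((p.2 : ℕ) : ℤ) + ((n : ℤ) - 1)))


/-- The linear map `X ↦ C°_{[X,R]}` is invertible iff `R(n-1,n-1) ≠ 0`. -/
theorem quadCC_bijective_iff
    (n : ℕ) (hn : 1 ≤ n) (R : Matrix (Fin n) (Fin n) ℂ) :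
    Function.Bijective (fun X : Matrix (Fin n) (Fin n) ℂ => quadCC X R) ↔
      R ⟨n - 1, by omega⟩ ⟨n - 1, by omega⟩ ≠ 0 := by

  classical
  set c : ℂ := R ⟨n - 1, by omega⟩ ⟨n - 1, by omega⟩ with hc
  set M : Matrix (Fin n × Fin n) (Fin n × Fin n) ℂ := Mrow R with hM
  -- the equivalence
  let e : Matrix (Fin n) (Fin n) ℂ ≃ (Fin n × Fin n → ℂ) :=
    { toFun := fun X p => X p.1 p.2
      invFun := fun v => Matrix.of fun i j => v (i, j)
      left_inv := fun X => rfl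
      right_inv := fun v => rfl }
  have key : ∀ X : Matrix (Fin n) (Fin n) ℂ, e (quadCC X R) = M.mulVec (e X) := by
    intro X
    funext p
    obtain ⟨i, j⟩ := p
    show crossCorr X R _ _ = _
    rw [Matrix.mulVec, dotProduct, Fintype.sum_prod_type]
    unfold crossCorr
    refine Finset.sum_congr rfl fun t1 _ => Finset.sum_congr rfl fun t2 _ => ?_
    have h1 : ((t1 : ℕ) : ℤ) - (((i : ℕ) : ℤ) - ((n : ℤ) - 1))
        = ((t1 : ℕ) : ℤ) - ((i : ℕ) : ℤ) + ((n : ℤ) - 1) := by ring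
    have h2 : ((t2 : ℕ) : ℤ) - (((j : ℕ) : ℤ) - ((n : ℤ) - 1))
        = ((t2 : ℕ) : ℤ) - ((j : ℕ) : ℤ) + ((n : ℤ) - 1) := by ring
    rw [h1, h2]
    exact (mul_comm _ _)
  have hcomp : (fun X : Matrix (Fin n) (Fin n) ℂ => quadCC X R)
      = e.symm ∘ M.mulVec ∘ e := by
    funext X
    show quadCC X R = e.symm (M.mulVec (e X))
    rw [← key X, Equiv.symm_apply_apply]
  -- determinant computation
  have htri : (M.submatrix (ofLex : Fin n ×ₗ Fin n ≃ Fin n × Fin n)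
      (ofLex : Fin n ×ₗ Fin n ≃ Fin n × Fin n)).BlockTriangular OrderDual.toDual := by
    intro p q hlt
    have hlt' : toLex (ofLex p) < toLex (ofLex q) := hlt
    rw [Prod.Lex.lt_iff] at hlt'
    show Mrow R (ofLex p) (ofLex q) = 0
    unfold Mrow
    rcases hlt' with h | ⟨h1, h2⟩
    · have : ¬ (0 ≤ (((ofLex q).1 : ℕ) : ℤ) - (((ofLex p).1 : ℕ) : ℤ) + ((n : ℤ) - 1) ∧
          (((ofLex q).1 : ℕ) : ℤ) - (((ofLex p).1 : ℕ) : ℤ) + ((n : ℤ) - 1) < (n : ℤ) ∧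
          0 ≤ (((ofLex q).2 : ℕ) : ℤ) - (((ofLex p).2 : ℕ) : ℤ) + ((n : ℤ) - 1) ∧
          (((ofLex q).2 : ℕ) : ℤ) - (((ofLex p).2 : ℕ) : ℤ) + ((n : ℤ) - 1) < (n : ℤ)) := by
        have : ((ofLex p).1 : ℕ) < ((ofLex q).1 : ℕ) := h
        omega
      simp [zext, this]
    · have : ¬ (0 ≤ (((ofLex q).1 : ℕ) : ℤ) - (((ofLex p).1 : ℕ) : ℤ) + ((n : ℤ) - 1) ∧
          (((ofLex q).1 : ℕ) : ℤ) - (((ofLex p).1 : ℕ) : ℤ) + ((n : ℤ) - 1) < (n : ℤ) ∧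
          0 ≤ (((ofLex q).2 : ℕ) : ℤ) - (((ofLex p).2 : ℕ) : ℤ) + ((n : ℤ) - 1) ∧
          (((ofLex q).2 : ℕ) : ℤ) - (((ofLex p).2 : ℕ) : ℤ) + ((n : ℤ) - 1) < (n : ℤ)) := by
        have h2' : ((ofLex p).2 : ℕ) < ((ofLex q).2 : ℕ) := h2
        have h1' : ((ofLex p).1 : ℕ) = ((ofLex q).1 : ℕ) := congrArg Fin.val h1
        omega
      simp [zext, this]
  have hdiag : ∀ p : Fin n × Fin n, M p p = conj c := by
    intro p
    show Mrow R p p = conj c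
    unfold Mrow
    have h1 : (((p.1 : ℕ) : ℤ) - ((p.1 : ℕ) : ℤ) + ((n : ℤ) - 1)) = (n : ℤ) - 1 := by ring
    have h2 : (((p.2 : ℕ) : ℤ) - ((p.2 : ℕ) : ℤ) + ((n : ℤ) - 1)) = (n : ℤ) - 1 := by ring
    rw [Matrix.of_apply, h1, h2]
    have hcond : 0 ≤ (n : ℤ) - 1 ∧ (n : ℤ) - 1 < (n : ℤ) ∧ 0 ≤ (n : ℤ) - 1 ∧ (n : ℤ) - 1 < (n : ℤ) := by
      omega
    rw [zext, dif_pos hcond]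
    have hv : ((n : ℤ) - 1).toNat = n - 1 := by omega
    rw [hc]
    simp only [hv]
  have hdet : M.det = conj c ^ (n * n) := by
    have hsub := Matrix.det_submatrix_equiv_self
      (ofLex : Fin n ×ₗ Fin n ≃ Fin n × Fin n) M
    have := Matrix.det_of_lowerTriangular _ htri
    rw [hsub] at this
    rw [this]
    calc ∏ p : Fin n ×ₗ Fin n, M.submatrix ofLex ofLex p p
          = ∏ _p : Fin n ×ₗ Fin n, conj c := by
          exact Finset.prod_congr rfl fun p _ => hdiag (ofLex p)
      _ = conj c ^ (n * n) := by
          rw [Finset.prod_const, Finset.card_univ]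
          congr 1
          simp [Fintype.card_prod]
  constructor
  · intro hbij
    rw [hcomp] at hbij
    have h1 : Function.Bijective (M.mulVec ∘ ⇑e) :=
      (Equiv.comp_bijective (M.mulVec ∘ ⇑e) e.symm).mp hbij
    have hbij' : Function.Bijective (M.mulVec) :=
      (Equiv.bijective_comp e M.mulVec).mp h1
    have hu : IsUnit M := Matrix.mulVec_injective_iff_isUnit.mp hbij'.injective
    rw [Matrix.isUnit_iff_isUnit_det, isUnit_iff_ne_zero, hdet] at hu
    intro h0
    apply hu
    simp only [h0, map_zero]
    exact zero_pow (Nat.mul_ne_zero (by omega) (by omega))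
  · intro hne
    have hu : IsUnit M := by
      rw [Matrix.isUnit_iff_isUnit_det, isUnit_iff_ne_zero, hdet]
      exact pow_ne_zero _ (by simpa using hne)
    have hbij' : Function.Bijective (M.mulVec) :=
      ⟨Matrix.mulVec_injective_iff_isUnit.mpr hu,
        Matrix.mulVec_surjective_iff_isUnit.mpr hu⟩
    rw [hcomp]
    exact e.symm.bijective.comp (hbij'.comp e.bijective)
end
end

section
/- Let n ≥ 1, let X ∈ ℂ^{n×n}, and let R_s ∈ ℂ^{n×n} be the slit reference, R_s(t1,t2) = 1 if t2 = n−1 and 0 otherwise. Then the quadrant cross-correlation satisfies C°_{[X,R_s]}(i,j) = Σ_{t1=0}^{i} X(t1,j) for all i,j ∈ {0,...,n−1}; equivalently, M_{R_s} = I_n ⊗ 1_L where 1_L ∈ ℝ^{n×n} is the lower-triangular all-ones matrix, and consequently X = D_n · C°_{[X,R_s]} where D_n is the first-order difference matrix. -/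
open Complex MeasureTheory ProbabilityTheory Matrix ComplexConjugate
open scoped Kronecker

noncomputable section

lemma quadCC_slit (n : ℕ) (hn : 1 ≤ n) (X : Matrix (Fin n) (Fin n) ℂ) (i j : Fin n) :
    quadCC X (slitRef n) i j = ∑ t1 ∈ Finset.Iic i, X t1 j := by
  have hterm : ∀ t1 t2 : Fin n,
      X t1 t2 * conj (zext (slitRef n) (((t1:ℕ):ℤ) - (((i:ℕ):ℤ) - ((n:ℤ)-1)))
        (((t2:ℕ):ℤ) - (((j:ℕ):ℤ) - ((n:ℤ)-1)))) =
      if t2 = j then (if (t1:ℕ) ≤ (i:ℕ) then X t1 j else 0) else 0 := by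
    intro t1 t2
    by_cases ht2 : t2 = j
    · subst ht2
      rw [if_pos rfl]
      by_cases ht1 : (t1:ℕ) ≤ (i:ℕ)
      · rw [if_pos ht1]
        unfold zext
        rw [dif_pos (by omega)]
        unfold slitRef
        simp only [Matrix.of_apply, Fin.val_mk]
        rw [if_pos (by omega)]
        simp
      · rw [if_neg ht1]
        unfold zext
        rw [dif_neg (by omega)]
        simp
    · rw [if_neg ht2]
      have ht2' : (t2:ℕ) ≠ (j:ℕ) := fun h => ht2 (Fin.ext h)
      unfold zext
      by_cases hr : 0 ≤ ((t1:ℕ):ℤ) - (((i:ℕ):ℤ) - ((n:ℤ)-1)) ∧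
          ((t1:ℕ):ℤ) - (((i:ℕ):ℤ) - ((n:ℤ)-1)) < (n:ℤ) ∧
          0 ≤ ((t2:ℕ):ℤ) - (((j:ℕ):ℤ) - ((n:ℤ)-1)) ∧
          ((t2:ℕ):ℤ) - (((j:ℕ):ℤ) - ((n:ℤ)-1)) < (n:ℤ)
      · rw [dif_pos hr]
        unfold slitRef
        simp only [Matrix.of_apply, Fin.val_mk]
        rw [if_neg (by omega)]
        simp
      · rw [dif_neg hr]
        simp
  simp only [quadCC, crossCorr, Matrix.of_apply]
  rw [Finset.sum_congr rfl (fun t1 _ => Finset.sum_congr rfl fun t2 _ => hterm t1 t2)]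
  simp only [Finset.sum_ite_eq', Finset.mem_univ, if_true]
  rw [show (Finset.Iic i) = Finset.univ.filter (fun t1 : Fin n => (t1:ℕ) ≤ (i:ℕ)) from by
    ext t; simp only [Finset.mem_Iic, Finset.mem_filter, Finset.mem_univ, true_and, Fin.le_def], Finset.sum_filter]

lemma part2 (n : ℕ) (hn : 1 ≤ n)
    (M : Matrix (Fin n × Fin n) (Fin n × Fin n) ℂ)
    (hM : ∀ Z : Matrix (Fin n) (Fin n) ℂ, vecM (quadCC Z (slitRef n)) = M.mulVec (vecM Z)) :
    M = (1 : Matrix (Fin n) (Fin n) ℂ) ⊗ₖ oneL n := by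
  ext p q
  set Z : Matrix (Fin n) (Fin n) ℂ :=
    Matrix.of (fun a b => if a = q.2 ∧ b = q.1 then 1 else 0) with hZ
  have h := congrFun (hM Z) p
  have hv : vecM Z = fun r => if r = q then 1 else 0 := by
    funext r
    simp only [vecM, hZ, Matrix.of_apply]
    by_cases h : r = q
    · subst h; simp
    · rw [if_neg h, if_neg]
      intro ⟨h1, h2⟩
      exact h (Prod.ext h2 h1)
  rw [hv] at h
  have hrhs : M.mulVec (fun r => if r = q then (1:ℂ) else 0) p = M p q := by
    simp [Matrix.mulVec, dotProduct]
  rw [hrhs] at h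
  rw [← h]
  have hsum : vecM (quadCC Z (slitRef n)) p =
      if q.2 ∈ Finset.Iic p.2 then (if p.1 = q.1 then (1:ℂ) else 0) else 0 := by
    show quadCC Z (slitRef n) p.2 p.1 = _
    rw [quadCC_slit n hn Z p.2 p.1]
    simp only [hZ, Matrix.of_apply, ite_and]
    rw [Finset.sum_ite_eq']
  rw [hsum]
  simp only [Matrix.kroneckerMap_apply, Matrix.one_apply, oneL, Matrix.of_apply, Finset.mem_Iic]
  split_ifs <;> ring

lemma part3 (n : ℕ) (hn : 1 ≤ n) (X : Matrix (Fin n) (Fin n) ℂ) :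
    X = Dmat n * quadCC X (slitRef n) := by
  ext i j
  symm
  rw [Matrix.mul_apply]
  rw [Finset.sum_congr rfl (fun k _ => by rw [quadCC_slit n hn X k j])]
  by_cases hi : (i:ℕ) = 0
  · rw [Finset.sum_eq_single i]
    · rw [show Dmat n i i = 1 from by simp [Dmat]]
      rw [show Finset.Iic i = {i} from by
        ext t; simp only [Finset.mem_Iic, Finset.mem_singleton, Fin.le_def, Fin.ext_iff]; omega]
      simp
    · intro k _ hk
      rw [show Dmat n i k = 0 from by
        simp only [Dmat, Matrix.of_apply]
        rw [if_neg (fun h => hk h.symm), if_neg (by omega)]]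
      ring
    · intro h; exact absurd (Finset.mem_univ i) h
  · obtain ⟨i', hval⟩ : ∃ i' : Fin n, (i':ℕ) = (i:ℕ) - 1 := ⟨⟨(i:ℕ)-1, by omega⟩, rfl⟩
    have hDm : ∀ k : Fin n, Dmat n i k =
        (if k = i then 1 else 0) + (if k = i' then -1 else 0) := by
      intro k
      simp only [Dmat, Matrix.of_apply]
      rcases eq_or_ne i k with h1 | h1
      · rw [if_pos h1, if_pos h1.symm, if_neg (fun h => by
          have h' := congrArg Fin.val h
          have h'' := congrArg Fin.val h1
          omega)]
        ring
      · rcases eq_or_ne k i' with h2 | h2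
        · have hk : (k:ℕ) + 1 = (i:ℕ) := by
            have := congrArg Fin.val h2; omega
          rw [if_neg h1, if_pos hk, if_neg (fun h => h1 h.symm), if_pos h2]
          ring
        · have hk : ¬((k:ℕ) + 1 = (i:ℕ)) := fun hkk => h2 (Fin.ext (by omega))
          rw [if_neg h1, if_neg hk, if_neg (fun h => h1 h.symm), if_neg h2]
          ring
    rw [Finset.sum_congr rfl (fun k _ => by rw [hDm k])]
    simp only [add_mul, ite_mul, one_mul, neg_one_mul, zero_mul, Finset.sum_add_distrib,
      Finset.sum_ite_eq', Finset.mem_univ, if_true]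
    have hins : Finset.Iic i = insert i (Finset.Iic i') := by
      ext t
      simp only [Finset.mem_Iic, Finset.mem_insert, Fin.le_def, Fin.ext_iff, hval]
      omega
    rw [hins, Finset.sum_insert (by
      simp only [Finset.mem_Iic, Fin.le_def, hval]; omega)]
    ring

/-- For the slit reference, the quadrant cross-correlation is the columnwise
cumulative sum of `X`; equivalently `M_{R_s} = I_n ⊗ 1_L`, and consequently
`X = D_n · C°_{[X,R_s]}`. -/
theorem slit_reference_quadCC
    (n : ℕ) (hn : 1 ≤ n) (X : Matrix (Fin n) (Fin n) ℂ) :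
    (∀ i j : Fin n, quadCC X (slitRef n) i j = ∑ t1 ∈ Finset.Iic i, X t1 j) ∧
    (∀ M : Matrix (Fin n × Fin n) (Fin n × Fin n) ℂ,
        (∀ Z : Matrix (Fin n) (Fin n) ℂ, vecM (quadCC Z (slitRef n)) = M.mulVec (vecM Z)) →
        M = (1 : Matrix (Fin n) (Fin n) ℂ) ⊗ₖ oneL n) ∧
    X = Dmat n * quadCC X (slitRef n) :=
  ⟨quadCC_slit n hn X, part2 n hn, part3 n hn X⟩
end
end

section
/- Let n ≥ 1, let X, R ∈ ℂ^{n×n} with R(n−1,n−1) ≠ 0, and let m ≥ 4n−1. Let Y ∈ ℝ^{m×m} be the squared Fourier magnitude data Y(k1,k2) = |\widehat{[X,R]}(k1,k2)|², using the size m×m oversampled DFT of the composite signal [X,R] ∈ ℂ^{n×2n}. Then referenced deconvolution exactly recovers X from Y: vec(X) = T_R · vec(Y), where T_R = (1/m²)·M_R^{−1}·[(P2·F_RA*) ⊗ (P1·F_LA*)]. -/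
open Complex MeasureTheory ProbabilityTheory Matrix ComplexConjugate
open scoped Kronecker

noncomputable section

/-!
Expanding `|Ẑ(k)|²` as a double sum over pairs of samples and summing against
`exp (2πi k·s / m)`, orthogonality of the `m`-th roots of unity turns the inverse DFT of the
power spectrum into `m²` times the autocorrelation of `Z = [X, R]`. There is no aliasing because
the lags `s` that occur satisfy `|s₁| + n ≤ m` and `|s₂| + 2n ≤ m`, which is where `m ≥ 4n - 1`
enters. `P₂F_RA^* ⊗ P₁F_LA^*` picks out the lags with `s₂ ∈ [-(2n-1), -n]`; at those lags
only columns of `X` meet columns of `R`, so the autocorrelation there is `C°_{[X,R]}`, that is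
`M_R vec X`. Ordering the pairs `(column, row)` lexicographically makes `M_R` lower triangular
with constant diagonal `conj R(n-1, n-1) ≠ 0`, so it can be inverted.
-/

def dftKernel (m : ℕ) (s : ℤ) : ℂ :=
  Complex.exp (2 * (Real.pi : ℂ) * Complex.I * (s : ℂ) / (m : ℂ))

lemma dftKernel_add (m : ℕ) (a b : ℤ) :
    dftKernel m (a + b) = dftKernel m a * dftKernel m b := by
  rw [dftKernel, dftKernel, dftKernel, ← Complex.exp_add]
  congr 1
  push_cast
  ring

lemma conj_dftKernel (m : ℕ) (s : ℤ) : conj (dftKernel m s) = dftKernel m (-s) := by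
  rw [dftKernel, dftKernel, ← Complex.exp_conj]
  congr 1
  simp only [map_div₀, map_mul, Complex.conj_I, map_intCast, map_natCast, map_ofNat,
    Complex.conj_ofReal]
  push_cast
  ring

lemma dftKernel_eq_zpow (m : ℕ) (s : ℤ) :
    dftKernel m s = Complex.exp (2 * Real.pi * Complex.I / m) ^ s := by
  rw [dftKernel, ← Complex.exp_int_mul]
  congr 1
  ring

lemma sum_dftKernel_mul {m : ℕ} {s : ℤ} (hs : |s| < m) :
    ∑ k : Fin m, dftKernel m (k * s) = if s = 0 then (m : ℂ) else 0 := by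
  split_ifs with h0
  · simp [h0, dftKernel]
  have hm : m ≠ 0 := by
    rintro rfl
    simp only [Nat.cast_zero] at hs
    linarith [abs_nonneg s]
  have hζ := Complex.isPrimitiveRoot_exp m hm
  have hw : dftKernel m s ≠ 1 := by
    rw [dftKernel_eq_zpow, Ne, hζ.zpow_eq_one_iff_dvd]
    exact fun hdvd => h0 (Int.eq_zero_of_abs_lt_dvd hdvd hs)
  have hwm : dftKernel m s ^ m = 1 := by
    rw [dftKernel_eq_zpow, ← zpow_natCast, ← _root_.zpow_mul, mul_comm s, _root_.zpow_mul,
      zpow_natCast, hζ.pow_eq_one, _root_.one_zpow]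
  calc ∑ k : Fin m, dftKernel m (k * s) = ∑ k ∈ Finset.range m, dftKernel m s ^ k := by
        rw [← Fin.sum_univ_eq_sum_range]
        refine Finset.sum_congr rfl fun k _ => ?_
        rw [dftKernel_eq_zpow, dftKernel_eq_zpow, ← zpow_natCast, ← _root_.zpow_mul, mul_comm s]
    _ = 0 := by rw [geom_sum_eq hw, hwm, sub_self, zero_div]

lemma sum_sum_dftKernel {m : ℕ} {a b : ℤ} (ha : |a| < m) (hb : |b| < m) :
    ∑ k1 : Fin m, ∑ k2 : Fin m, dftKernel m (k1 * a + k2 * b)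
      = if a = 0 ∧ b = 0 then (m : ℂ) ^ 2 else 0 := by
  simp only [dftKernel_add, ← Finset.mul_sum, ← Finset.sum_mul, sum_dftKernel_mul ha,
    sum_dftKernel_mul hb]
  split_ifs <;> simp_all [sq]

lemma sum_ite_eq_zext {N1 N2 : ℕ} (Z : Matrix (Fin N1) (Fin N2) ℂ) (a b : ℤ) :
    ∑ u : Fin N1 × Fin N2, (if ((u.1 : ℕ) : ℤ) = a ∧ ((u.2 : ℕ) : ℤ) = b then Z u.1 u.2 else 0)
      = zext Z a b := by
  by_cases hab : 0 ≤ a ∧ a < (N1 : ℤ) ∧ 0 ≤ b ∧ b < (N2 : ℤ)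
  · rw [zext, dif_pos hab, ← Fintype.sum_ite_eq' ((⟨a.toNat, by omega⟩, ⟨b.toNat, by omega⟩) :
      Fin N1 × Fin N2) fun u => Z u.1 u.2]
    refine Finset.sum_congr rfl fun u _ => if_congr ?_ rfl rfl
    simp only [Prod.ext_iff, Fin.ext_iff]
    omega
  · rw [zext, dif_neg hab]
    refine Finset.sum_eq_zero fun u _ => if_neg ?_
    have := u.1.isLt
    have := u.2.isLt
    omega

lemma dft2_eq_sum_dftKernel {N1 N2 : ℕ} (m : ℕ) (Z : Matrix (Fin N1) (Fin N2) ℂ) (k1 k2 : ℕ) :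
    dft2 m m Z k1 k2
      = ∑ t : Fin N1 × Fin N2, Z t.1 t.2 * dftKernel m (-((t.1 : ℕ) * k1 + (t.2 : ℕ) * k2)) := by
  rw [dft2, Fintype.sum_prod_type]
  refine Finset.sum_congr rfl fun t1 _ => Finset.sum_congr rfl fun t2 _ => ?_
  rw [dftKernel]
  congr 2
  push_cast
  ring

lemma dftKernel_mul_sq_norm_dft2 {N1 N2 : ℕ} (m : ℕ) (Z : Matrix (Fin N1) (Fin N2) ℂ)
    (s1 s2 : ℤ) (k1 k2 : ℕ) :
    dftKernel m (k1 * s1 + k2 * s2) * ((‖dft2 m m Z k1 k2‖ ^ 2 : ℝ) : ℂ)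
      = ∑ t : Fin N1 × Fin N2, ∑ u : Fin N1 × Fin N2, Z t.1 t.2 * conj (Z u.1 u.2) *
          dftKernel m (k1 * (s1 - t.1 + u.1) + k2 * (s2 - t.2 + u.2)) := by
  rw [Complex.ofReal_pow, ← Complex.mul_conj', dft2_eq_sum_dftKernel, map_sum,
    Finset.sum_mul_sum, Finset.mul_sum]
  refine Finset.sum_congr rfl fun t _ => ?_
  rw [Finset.mul_sum]
  refine Finset.sum_congr rfl fun u _ => ?_
  rw [map_mul, conj_dftKernel]
  calc _ = Z t.1 t.2 * conj (Z u.1 u.2) * (dftKernel m (k1 * s1 + k2 * s2) *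
        dftKernel m (-((t.1 : ℕ) * k1 + (t.2 : ℕ) * k2)) *
        dftKernel m (-(-((u.1 : ℕ) * k1 + (u.2 : ℕ) * k2)))) := by ring
    _ = _ := by
      rw [← dftKernel_add, ← dftKernel_add]
      congr 2
      ring

theorem sum_dftKernel_mul_sq_norm_dft2 {N1 N2 m : ℕ} (Z : Matrix (Fin N1) (Fin N2) ℂ)
    (s1 s2 : ℤ) (h1 : |s1| + N1 ≤ m) (h2 : |s2| + N2 ≤ m) :
    ∑ k1 : Fin m, ∑ k2 : Fin m,
        dftKernel m (k1 * s1 + k2 * s2) * ((‖dft2 m m Z k1 k2‖ ^ 2 : ℝ) : ℂ)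
      = (m : ℂ) ^ 2 * autocorr Z s1 s2 := by
  have hzext : ∀ t : Fin N1 × Fin N2,
      ∑ u : Fin N1 × Fin N2, Z t.1 t.2 * conj (Z u.1 u.2) *
          ∑ k1 : Fin m, ∑ k2 : Fin m,
            dftKernel m (k1 * (s1 - t.1 + u.1) + k2 * (s2 - t.2 + u.2))
        = (m : ℂ) ^ 2 * (Z t.1 t.2 * conj (zext Z (t.1 - s1) (t.2 - s2))) := by
    intro t
    rw [← sum_ite_eq_zext, map_sum, Finset.mul_sum, Finset.mul_sum]
    refine Finset.sum_congr rfl fun u _ => ?_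
    have := t.1.isLt; have := t.2.isLt; have := u.1.isLt; have := u.2.isLt
    have := le_abs_self s1; have := neg_abs_le s1; have := le_abs_self s2; have := neg_abs_le s2
    rw [sum_sum_dftKernel (abs_lt.mpr ⟨by omega, by omega⟩) (abs_lt.mpr ⟨by omega, by omega⟩)]
    have hiff : s1 - t.1 + u.1 = 0 ∧ s2 - t.2 + u.2 = 0 ↔
        ((u.1 : ℕ) : ℤ) = t.1 - s1 ∧ ((u.2 : ℕ) : ℤ) = t.2 - s2 := by omega
    rw [if_congr hiff rfl rfl]
    split_ifs
    · ring
    · simp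
  calc _ = ∑ k1 : Fin m, ∑ k2 : Fin m, ∑ t : Fin N1 × Fin N2, ∑ u : Fin N1 × Fin N2,
        Z t.1 t.2 * conj (Z u.1 u.2) *
          dftKernel m (k1 * (s1 - t.1 + u.1) + k2 * (s2 - t.2 + u.2)) := by
        simp only [dftKernel_mul_sq_norm_dft2]
    _ = ∑ t : Fin N1 × Fin N2, ∑ u : Fin N1 × Fin N2, Z t.1 t.2 * conj (Z u.1 u.2) *
          ∑ k1 : Fin m, ∑ k2 : Fin m,
            dftKernel m (k1 * (s1 - t.1 + u.1) + k2 * (s2 - t.2 + u.2)) := by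
        simp only [Finset.mul_sum]
        rw [← Fintype.sum_prod_type', Finset.sum_comm]
        refine Finset.sum_congr rfl fun t _ => ?_
        rw [Finset.sum_comm]
        refine Finset.sum_congr rfl fun u _ => ?_
        rw [Fintype.sum_prod_type]
    _ = _ := by
        rw [Finset.sum_congr rfl fun t _ => hzext t, ← Finset.mul_sum, autocorr, crossCorr,
          Fintype.sum_prod_type]

lemma zext_hcat_of_le {n : ℕ} (X R : Matrix (Fin n) (Fin n) ℂ) (a : ℤ) {b : ℤ}
    (hb : (n : ℤ) ≤ b) : zext (hcat X R) a b = zext R a (b - n) := by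
  simp only [zext, hcat, Matrix.of_apply]
  split_ifs <;> first | omega | rfl | (congr 2; omega)

theorem autocorr_hcat {n : ℕ} (X R : Matrix (Fin n) (Fin n) ℂ) (s1 : ℤ) {s2 : ℤ}
    (hs2 : s2 ≤ -n) : autocorr (hcat X R) s1 s2 = crossCorr X R s1 (s2 + n) := by
  rw [autocorr, crossCorr, crossCorr]
  refine Finset.sum_congr rfl fun t1 _ => ?_
  symm
  refine Fintype.sum_of_injective (Fin.castLE (by omega)) (Fin.castLE_injective _) _ _ ?_ ?_
  · intro t2 ht2
    have hn : n ≤ (t2 : ℕ) := by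
      by_contra h
      exact ht2 ⟨⟨t2, by omega⟩, rfl⟩
    have := t2.isLt
    rw [zext, dif_neg (by omega), map_zero, mul_zero]
  · intro t2
    rw [zext_hcat_of_le X R _ (by rw [Fin.val_castLE]; omega)]
    simp [hcat, sub_sub]

theorem vecM_quadCC {n : ℕ} (X R : Matrix (Fin n) (Fin n) ℂ) :
    vecM (quadCC X R) = MR R *ᵥ vecM X := by
  funext p
  simp only [vecM, quadCC, crossCorr, MR, Matrix.mulVec, dotProduct, Matrix.of_apply,
    Fintype.sum_prod_type]
  rw [Finset.sum_comm]
  refine Finset.sum_congr rfl fun t1 _ => Finset.sum_congr rfl fun t2 _ => ?_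
  rw [mul_comm]
  congr 3 <;> ring

lemma MR_apply_self {n : ℕ} (hn : 1 ≤ n) (R : Matrix (Fin n) (Fin n) ℂ) (p : Fin n × Fin n) :
    MR R p p = conj (R ⟨n - 1, by omega⟩ ⟨n - 1, by omega⟩) := by
  simp only [MR, Matrix.of_apply, sub_self, zero_add]
  rw [zext, dif_pos (by omega)]
  congr 3 <;> omega

theorem det_MR {n : ℕ} (hn : 1 ≤ n) (R : Matrix (Fin n) (Fin n) ℂ) :
    (MR R).det = conj (R ⟨n - 1, by omega⟩ ⟨n - 1, by omega⟩) ^ (n * n) := by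
  rw [← det_submatrix_equiv_self toLex.symm, det_of_isLowerTriangular]
  · simp [MR_apply_self hn]
  · intro p q hpq
    obtain ⟨q1, q2⟩ := q
    obtain ⟨p1, p2⟩ := p
    have := p1.isLt; have := p2.isLt; have := q1.isLt; have := q2.isLt
    change MR R (p1, p2) (q1, q2) = 0
    rw [MR, Matrix.of_apply, zext, dif_neg, map_zero]
    dsimp only
    rcases Prod.Lex.lt_iff.mp (OrderDual.toDual_lt_toDual.mp hpq) with h | ⟨-, h⟩
    · have : (p1 : ℕ) < q1 := h
      omega
    · have : (p2 : ℕ) < q2 := h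
      omega

theorem kronecker_mulVec_sq_norm_dft2_hcat {n m : ℕ} (hm : 4 * n - 1 ≤ m)
    (X R : Matrix (Fin n) (Fin n) ℂ) :
    (P2FRA n m ⊗ₖ P1FLA n m) *ᵥ
        vecM (Matrix.of fun k1 k2 : Fin m => ((‖dft2 m m (hcat X R) k1 k2‖ ^ 2 : ℝ) : ℂ))
      = (m : ℂ) ^ 2 • vecM (quadCC X R) := by
  funext r
  have := r.1.isLt
  have := r.2.isLt
  have hs2 : ((r.1 : ℕ) : ℤ) - (2 * n - 1) ≤ -n := by omega
  simp only [Matrix.mulVec, dotProduct, Matrix.kroneckerMap_apply, vecM, Matrix.of_apply,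
    Fintype.sum_prod_type, Pi.smul_apply, smul_eq_mul, quadCC]
  rw [(by ring : ((r.1 : ℕ) : ℤ) - ((n : ℤ) - 1) = ((r.1 : ℕ) : ℤ) - (2 * n - 1) + n),
    ← autocorr_hcat X R _ hs2, ← sum_dftKernel_mul_sq_norm_dft2 _ _ _
      (by rw [abs_of_nonpos (by omega)]; omega) (by rw [abs_of_nonpos (by omega)]; omega),
    Finset.sum_comm]
  refine Finset.sum_congr rfl fun k1 _ => Finset.sum_congr rfl fun k2 _ => ?_
  rw [dftKernel_add, P2FRA, P1FLA, Matrix.of_apply, Matrix.of_apply, dftKernel, dftKernel,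
    mul_comm (Complex.exp _)]
  congr 4 <;> push_cast <;> ring

/-- Referenced deconvolution exactly recovers `X` from the squared Fourier
magnitude data `Y` of the composite signal `[X,R]`: `vec(X) = T_R · vec(Y)`. -/
theorem referenced_deconvolution_exact_recovery
    (n m : ℕ) (hn : 1 ≤ n) (hm : 4 * n - 1 ≤ m)
    (X R : Matrix (Fin n) (Fin n) ℂ)
    (hR : R ⟨n - 1, by omega⟩ ⟨n - 1, by omega⟩ ≠ 0)
    (Y : Fin m → Fin m → ℝ)
    (hY : ∀ k1 k2 : Fin m,
      Y k1 k2 = ‖dft2 m m (hcat X R) (k1 : ℕ) (k2 : ℕ)‖ ^ 2) :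
    ∀ p : Fin n × Fin n,
      X p.2 p.1 = ∑ q : Fin m × Fin m, TR m R p q * ((Y q.2 q.1 : ℝ) : ℂ) := by
  intro p
  have hdet : IsUnit (MR R).det := by
    rw [det_MR hn, isUnit_iff_ne_zero]
    exact pow_ne_zero _ ((map_ne_zero _).mpr hR)
  have hm2 : (m : ℂ) ^ 2 ≠ 0 := pow_ne_zero _ (Nat.cast_ne_zero.mpr (by omega))
  obtain rfl : Y = fun k1 k2 : Fin m => ‖dft2 m m (hcat X R) k1 k2‖ ^ 2 := funext₂ hY
  change vecM X p = (TR m R *ᵥ vecM (Matrix.of fun k1 k2 : Fin m =>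
    ((‖dft2 m m (hcat X R) k1 k2‖ ^ 2 : ℝ) : ℂ))) p
  rw [TR, smul_mulVec, ← mulVec_mulVec, kronecker_mulVec_sq_norm_dft2_hcat hm, vecM_quadCC,
    mulVec_smul, mulVec_mulVec, nonsing_inv_mul _ hdet, one_mulVec, smul_smul,
    inv_mul_cancel₀ hm2, one_smul]
end
end

section
/- Let T ∈ ℂ^{n²×m²}, let Y ∈ ℝ^{m×m} have nonnegative entries with ‖Y‖₁ = Σ_{k1,k2} Y(k1,k2) > 0, and let N_p > 0. Suppose the entries of the random matrix Ỹ are jointly independent with Ỹ(k1,k2) = (‖Y‖₁/N_p)·P(k1,k2), where P(k1,k2) is Poisson-distributed with parameter N_p·Y(k1,k2)/‖Y‖₁. Define X̃ and X by vec(X̃) = T·vec(Ỹ) and vec(X) = T·vec(Y). Then E‖X̃ − X‖_F² = (‖Y‖₁/N_p)·Σ_{k1,k2} S(k1,k2)·Y(k1,k2), where S(k1,k2) is the squared ℓ²-norm of column m·k1 + k2 of T. -/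
/-! The error `X̃ - X` is `T` applied to the centred vector `Ỹ - Y`, whose entries are independent
with variances `Var Ỹ(k) = (‖Y‖₁/N_p)² · Var P(k) = (‖Y‖₁/N_p) · Y(k)`, because a Poisson variable
has variance equal to its mean. Expanding `E‖T(Ỹ - Y)‖²` in covariances, independence kills the
off-diagonal terms, leaving `Σ_k ‖T(:, k)‖² · Var Ỹ(k)`.

The Poisson moments come from the identity `E[N f(N)] = r E[f(N + 1)]` for `N ~ Po(r)`. -/

open Complex MeasureTheory ProbabilityTheory Matrix ComplexConjugate
open scoped Kronecker

noncomputable section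

open scoped NNReal Nat

namespace ProbabilityTheory

variable (r : ℝ≥0)

lemma poissonMeasure_real_singleton_succ_mul (n : ℕ) :
    Po(r).real {n + 1} * (n + 1) = r * Po(r).real {n} := by
  rw [poissonMeasure_real_singleton, poissonMeasure_real_singleton, Nat.factorial_succ]
  push_cast
  field_simp
  ring

lemma integrable_natCast_mul_poissonMeasure {f : ℕ → ℝ}
    (hf : Integrable (fun n ↦ f (n + 1)) Po(r)) : Integrable (fun n : ℕ ↦ (n : ℝ) * f n) Po(r) := by
  rw [integrable_poissonMeasure_iff] at hf ⊢
  simp only [← poissonMeasure_real_singleton] at hf ⊢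
  rw [← summable_nat_add_iff 1]
  refine (hf.mul_left (r : ℝ)).congr fun n ↦ ?_
  rw [norm_mul, Nat.cast_add_one, Real.norm_of_nonneg (r := (n : ℝ) + 1) (by positivity),
    ← mul_assoc, ← mul_assoc, poissonMeasure_real_singleton_succ_mul]

lemma integral_natCast_mul_poissonMeasure (f : ℕ → ℝ) :
    ∫ n, (n : ℝ) * f n ∂Po(r) = r * ∫ n, f (n + 1) ∂Po(r) := by
  rw [integral_poissonMeasure, integral_poissonMeasure, ← tsum_mul_left,
    ← Nat.succ_injective.tsum_eq (f := fun n ↦ _ • ((n : ℝ) * f n))]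
  · simp only [← poissonMeasure_real_singleton, smul_eq_mul]
    congr with n
    rw [Nat.succ_eq_add_one, Nat.cast_add_one, ← mul_assoc, ← mul_assoc,
      poissonMeasure_real_singleton_succ_mul, mul_assoc]
  · rintro (_ | n) h
    · simp at h
    · exact ⟨n, rfl⟩

lemma integrable_natCast_poissonMeasure : Integrable (fun n : ℕ ↦ (n : ℝ)) Po(r) := by
  simpa using integrable_natCast_mul_poissonMeasure r (f := fun _ ↦ 1) (integrable_const 1)

lemma integral_natCast_poissonMeasure : ∫ n, (n : ℝ) ∂Po(r) = r := by
  simpa using integral_natCast_mul_poissonMeasure r (fun _ ↦ 1)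

lemma memLp_two_natCast_poissonMeasure : MemLp (fun n : ℕ ↦ (n : ℝ)) 2 Po(r) := by
  have h := integrable_natCast_mul_poissonMeasure r (f := Nat.cast)
    (by simpa using (integrable_natCast_poissonMeasure r).add (integrable_const 1))
  exact (memLp_two_iff_integrable_sq .of_discrete).2 (by simpa [sq] using h)

lemma variance_natCast_poissonMeasure : Var[fun n : ℕ ↦ (n : ℝ); Po(r)] = r := by
  have h := integral_natCast_mul_poissonMeasure r Nat.cast
  simp only [Nat.cast_add_one] at h
  rw [integral_add (integrable_natCast_poissonMeasure r) (integrable_const 1),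
    integral_natCast_poissonMeasure] at h
  rw [variance_eq_sub (memLp_two_natCast_poissonMeasure r)]
  simp only [Pi.pow_apply, sq, h, integral_natCast_poissonMeasure]
  simp
  ring

variable {Ω : Type*} [MeasurableSpace Ω] {μ : Measure Ω} {P : Ω → ℕ}

lemma hasLaw_poissonMeasure_of_measure_eq (hP : Measurable P)
    (h : ∀ j, μ {ω | P ω = j} = ENNReal.ofReal (Real.exp (-r) * r ^ j / j !)) :
    HasLaw P Po(r) μ where
  aemeasurable := hP.aemeasurable
  map_eq := Measure.ext_of_singleton fun j ↦ by
    rw [Measure.map_apply hP (measurableSet_singleton j), poissonMeasure_singleton, ← h]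
    rfl

variable {r}

lemma HasLaw.memLp_two_natCast_poissonMeasure (hP : HasLaw P Po(r) μ) :
    MemLp (fun ω ↦ (P ω : ℝ)) 2 μ := by
  have h := ProbabilityTheory.memLp_two_natCast_poissonMeasure r
  rw [← hP.map_eq] at h
  exact (memLp_map_measure_iff .of_discrete hP.aemeasurable).1 h

lemma HasLaw.integral_natCast_poissonMeasure (hP : HasLaw P Po(r) μ) :
    ∫ ω, (P ω : ℝ) ∂μ = r := by
  rw [← ProbabilityTheory.integral_natCast_poissonMeasure r, ← hP.integral_comp .of_discrete]
  rfl

lemma HasLaw.variance_natCast_poissonMeasure (hP : HasLaw P Po(r) μ) :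
    Var[fun ω ↦ (P ω : ℝ); μ] = r := by
  rw [← ProbabilityTheory.variance_natCast_poissonMeasure r, ← hP.map_eq,
    variance_map .of_discrete hP.aemeasurable]
  rfl

end ProbabilityTheory

lemma MeasureTheory.MemLp.integrable_sub_integral_mul_sub_integral {Ω : Type*}
    [MeasurableSpace Ω] {μ : Measure Ω} [IsFiniteMeasure μ] {X Y : Ω → ℝ}
    (hX : MemLp X 2 μ) (hY : MemLp Y 2 μ) :
    Integrable (fun ω ↦ (X ω - μ[X]) * (Y ω - μ[Y])) μ :=
  (hX.sub (memLp_const _)).integrable_mul (hY.sub (memLp_const _))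

lemma Complex.norm_sq_sum_mul_ofReal {ι : Type*} (s : Finset ι) (a : ι → ℂ) (z : ι → ℝ) :
    ‖∑ i ∈ s, a i * z i‖ ^ 2 = ∑ i ∈ s, ∑ j ∈ s, (a i * conj (a j)).re * (z i * z j) := by
  rw [Complex.sq_norm, ← Complex.ofReal_re (normSq _), ← Complex.mul_conj, map_sum,
    Finset.sum_mul_sum, Complex.re_sum]
  refine Finset.sum_congr rfl fun i _ ↦ ?_
  rw [Complex.re_sum]
  refine Finset.sum_congr rfl fun j _ ↦ ?_
  rw [map_mul, Complex.conj_ofReal, ← Complex.re_mul_ofReal]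
  push_cast
  ring_nf

namespace ProbabilityTheory

variable {Ω ι : Type*} [MeasurableSpace Ω] {μ : Measure Ω} [IsFiniteMeasure μ] [Fintype ι]
  {X : ι → Ω → ℝ}

lemma integrable_norm_sq_sum_mul_sub_integral (hX : ∀ i, MemLp (X i) 2 μ) (a : ι → ℂ) :
    Integrable (fun ω ↦ ‖∑ i, a i * ((X i ω - μ[X i] : ℝ) : ℂ)‖ ^ 2) μ := by
  simp only [Complex.norm_sq_sum_mul_ofReal]
  exact integrable_finsetSum _ fun i _ ↦ integrable_finsetSum _ fun j _ ↦
    ((hX i).integrable_sub_integral_mul_sub_integral (hX j)).const_mul _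

lemma integral_norm_sq_sum_mul_sub_integral (hX : ∀ i, MemLp (X i) 2 μ) (a : ι → ℂ) :
    ∫ ω, ‖∑ i, a i * ((X i ω - μ[X i] : ℝ) : ℂ)‖ ^ 2 ∂μ =
      ∑ i, ∑ j, (a i * conj (a j)).re * cov[X i, X j; μ] := by
  have hint (i j : ι) := ((hX i).integrable_sub_integral_mul_sub_integral (hX j)).const_mul
    (a i * conj (a j)).re
  simp only [Complex.norm_sq_sum_mul_ofReal]
  rw [integral_finsetSum _ fun i _ ↦ integrable_finsetSum _ fun j _ ↦ hint i j]
  refine Finset.sum_congr rfl fun i _ ↦ ?_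
  rw [integral_finsetSum _ fun j _ ↦ hint i j]
  exact Finset.sum_congr rfl fun j _ ↦ integral_const_mul _ _

lemma integral_norm_sq_sum_mul_sub_integral_of_indepFun (hX : ∀ i, MemLp (X i) 2 μ)
    (hindep : Pairwise fun i j ↦ IndepFun (X i) (X j) μ) (a : ι → ℂ) :
    ∫ ω, ‖∑ i, a i * ((X i ω - μ[X i] : ℝ) : ℂ)‖ ^ 2 ∂μ = ∑ i, ‖a i‖ ^ 2 * Var[X i; μ] := by
  rw [integral_norm_sq_sum_mul_sub_integral hX]
  refine Finset.sum_congr rfl fun i _ ↦ ?_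
  rw [Finset.sum_eq_single i (fun j _ hji ↦ by
      rw [(hindep hji.symm).covariance_eq_zero (hX i) (hX j), mul_zero]) (by simp),
    covariance_self (hX i).aemeasurable, Complex.mul_conj, Complex.ofReal_re, Complex.sq_norm]

theorem integral_sum_norm_sq_sum_mul_sub_integral_of_indepFun {κ : Type*} [Fintype κ]
    (T : Matrix κ ι ℂ) (hX : ∀ i, MemLp (X i) 2 μ)
    (hindep : Pairwise fun i j ↦ IndepFun (X i) (X j) μ) :
    ∫ ω, ∑ p, ‖∑ i, T p i * ((X i ω - μ[X i] : ℝ) : ℂ)‖ ^ 2 ∂μ =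
      ∑ i, (∑ p, ‖T p i‖ ^ 2) * Var[X i; μ] := by
  rw [integral_finsetSum _ fun p _ ↦ integrable_norm_sq_sum_mul_sub_integral hX (T p)]
  simp only [integral_norm_sq_sum_mul_sub_integral_of_indepFun hX hindep, Finset.sum_mul]
  exact Finset.sum_comm

end ProbabilityTheory

theorem expected_poisson_error_formula_general
    (n m : ℕ) {Ω : Type*} [MeasurableSpace Ω] (μ : Measure Ω) [IsProbabilityMeasure μ]
    (T : Matrix (Fin n × Fin n) (Fin m × Fin m) ℂ)
    (Y : Fin m → Fin m → ℝ) (hYnonneg : ∀ k1 k2, 0 ≤ Y k1 k2)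
    (L : ℝ) (hLpos : 0 < L)
    (Np : ℝ) (hNp : 0 < Np)
    (P : Fin m → Fin m → Ω → ℕ)
    (hPmeas : ∀ k1 k2, Measurable (P k1 k2))
    (hindep : iIndepFun (fun q : Fin m × Fin m => P q.1 q.2) μ)
    (hpmf : ∀ (k1 k2 : Fin m) (j : ℕ),
      μ {ω | P k1 k2 ω = j} =
        ENNReal.ofReal (Real.exp (-(Np * Y k1 k2 / L)) * (Np * Y k1 k2 / L) ^ j /
          (j.factorial : ℝ))) :
    (∫ ω, ∑ p : Fin n × Fin n,
        ‖(∑ q : Fin m × Fin m, T p q * (((L / Np) * (P q.1 q.2 ω : ℝ) : ℝ) : ℂ)) -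
          ∑ q : Fin m × Fin m, T p q * ((Y q.1 q.2 : ℝ) : ℂ)‖ ^ 2 ∂μ) =
      (L / Np) * ∑ k1 : Fin m, ∑ k2 : Fin m,
        (∑ p : Fin n × Fin n, ‖T p (k1, k2)‖ ^ 2) * Y k1 k2 := by
  have hrate (q : Fin m × Fin m) : 0 ≤ Np * Y q.1 q.2 / L := by
    have := hYnonneg q.1 q.2
    positivity
  have hlaw (q : Fin m × Fin m) : HasLaw (P q.1 q.2) Po((Np * Y q.1 q.2 / L).toNNReal) μ :=
    hasLaw_poissonMeasure_of_measure_eq _ (hPmeas _ _) fun j ↦ by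
      rw [Real.coe_toNNReal _ (hrate q)]
      exact hpmf _ _ j
  have hc (q : Fin m × Fin m) : L / Np * (Np * Y q.1 q.2 / L) = Y q.1 q.2 := by
    field_simp
  let X (q : Fin m × Fin m) (ω : Ω) : ℝ := L / Np * P q.1 q.2 ω
  have hX (q : Fin m × Fin m) : MemLp (X q) 2 μ :=
    (hlaw q).memLp_two_natCast_poissonMeasure.const_mul _
  have hmean (q : Fin m × Fin m) : μ[X q] = Y q.1 q.2 := by
    rw [integral_const_mul, (hlaw q).integral_natCast_poissonMeasure,
      Real.coe_toNNReal _ (hrate q), hc]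
  have hvar (q : Fin m × Fin m) : Var[X q; μ] = L / Np * Y q.1 q.2 := by
    rw [variance_const_mul, (hlaw q).variance_natCast_poissonMeasure,
      Real.coe_toNNReal _ (hrate q)]
    field_simp
  have hindepX : Pairwise fun q q' ↦ IndepFun (X q) (X q') μ := fun q q' hqq' ↦
    (hindep.indepFun hqq').comp (measurable_of_countable fun j : ℕ ↦ L / Np * (j : ℝ))
      (measurable_of_countable fun j : ℕ ↦ L / Np * (j : ℝ))
  calc _ = ∫ ω, ∑ p, ‖∑ q, T p q * ((X q ω - μ[X q] : ℝ) : ℂ)‖ ^ 2 ∂μ := by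
        simp only [hmean, ← Finset.sum_sub_distrib, ← mul_sub, Complex.ofReal_sub, X]
    _ = ∑ q, (∑ p, ‖T p q‖ ^ 2) * Var[X q; μ] :=
        integral_sum_norm_sq_sum_mul_sub_integral_of_indepFun T hX hindepX
    _ = _ := by
        simp only [hvar, Fintype.sum_prod_type, Finset.mul_sum]
        exact Finset.sum_congr rfl fun _ _ ↦ Finset.sum_congr rfl fun _ _ ↦ by ring

/-- Under the Poisson shot noise model, the expected squared recovery error
of `vec(X̃) = T·vec(Ỹ)` equals `(‖Y‖₁/N_p) · Σ_{k1,k2} S(k1,k2)·Y(k1,k2)`, where `S(k1,k2)` is the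
squared ℓ²-norm of column `m·k1+k2` of `T`. -/
theorem expected_poisson_error_formula
    (n m : ℕ) {Ω : Type*} [MeasurableSpace Ω] (μ : Measure Ω) [IsProbabilityMeasure μ]
    (T : Matrix (Fin n × Fin n) (Fin m × Fin m) ℂ)
    (Y : Fin m → Fin m → ℝ) (hYnonneg : ∀ k1 k2, 0 ≤ Y k1 k2)
    (L : ℝ) (hL : L = ∑ k1 : Fin m, ∑ k2 : Fin m, Y k1 k2) (hLpos : 0 < L)
    (Np : ℝ) (hNp : 0 < Np)
    (P : Fin m → Fin m → Ω → ℕ)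
    (hPmeas : ∀ k1 k2, Measurable (P k1 k2))
    (hindep : iIndepFun (fun q : Fin m × Fin m => P q.1 q.2) μ)
    (hpmf : ∀ (k1 k2 : Fin m) (j : ℕ),
      μ {ω | P k1 k2 ω = j} =
        ENNReal.ofReal (Real.exp (-(Np * Y k1 k2 / L)) * (Np * Y k1 k2 / L) ^ j /
          (j.factorial : ℝ))) :
    (∫ ω, ∑ p : Fin n × Fin n,
        ‖(∑ q : Fin m × Fin m, T p q * (((L / Np) * (P q.1 q.2 ω : ℝ) : ℝ) : ℂ)) -
          ∑ q : Fin m × Fin m, T p q * ((Y q.1 q.2 : ℝ) : ℂ)‖ ^ 2 ∂μ) =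
      (L / Np) * ∑ k1 : Fin m, ∑ k2 : Fin m,
        (∑ p : Fin n × Fin n, ‖T p (k1, k2)‖ ^ 2) * Y k1 k2 :=
  expected_poisson_error_formula_general n m μ T Y hYnonneg L hLpos Np hNp P hPmeas hindep hpmf
end
end

section
/- Let n ≥ 1, m ≥ 4n−1, and let R_p ∈ ℂ^{n×n} be the pinhole reference, R_p(t1,t2) = 1 if (t1,t2) = (n−1,n−1) and 0 otherwise. Then for all k1, k2 ∈ {0,...,m−1}, the reference scaling factor is constant: S_{R_p}(k1,k2) = n²/m⁴. -/
open Complex MeasureTheory ProbabilityTheory Matrix ComplexConjugate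
open scoped Kronecker

noncomputable section

/-! Correlating with the pinhole at `(n-1, n-1)` only undoes the shift by `n-1`, so `M_{R_p} = 1`
and every entry of `T_{R_p}` is `1/m²` times a product of two roots of unity. -/

theorem MR_pinholeRef (n : ℕ) : MR (pinholeRef n) = 1 := by
  ext ⟨p1, p2⟩ ⟨q1, q2⟩
  simp only [MR, pinholeRef, zext, Matrix.of_apply, Matrix.one_apply, Prod.mk.injEq,
    Fin.ext_iff]
  have := p1.isLt; have := p2.isLt; have := q1.isLt; have := q2.isLt
  by_cases h : (p1 : ℕ) = q1 ∧ (p2 : ℕ) = q2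
  · rw [dif_pos (by omega), if_pos (by omega), if_pos h, map_one]
  · rw [if_neg h]
    split_ifs <;> first | omega | simp

theorem norm_exp_two_pi_I_mul_ofReal_div (x y : ℝ) :
    ‖Complex.exp (2 * (Real.pi : ℂ) * Complex.I * (x : ℂ) / (y : ℂ))‖ = 1 := by
  rw [show 2 * (Real.pi : ℂ) * Complex.I * x / y = ((2 * Real.pi * x / y : ℝ) : ℂ) * Complex.I by
    push_cast; ring]
  exact Complex.norm_exp_ofReal_mul_I _

theorem norm_P1FLA_apply (n m : ℕ) (t : Fin n) (k : Fin m) : ‖P1FLA n m t k‖ = 1 := by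
  simpa [P1FLA, mul_assoc] using
    norm_exp_two_pi_I_mul_ofReal_div ((k : ℕ) * ((t : ℕ) - ((n : ℝ) - 1))) m

theorem norm_P2FRA_apply (n m : ℕ) (t : Fin n) (k : Fin m) : ‖P2FRA n m t k‖ = 1 := by
  simpa [P2FRA, mul_assoc] using
    norm_exp_two_pi_I_mul_ofReal_div ((k : ℕ) * ((t : ℕ) - (2 * (n : ℝ) - 1))) m

theorem TR_apply_of_MR_eq_one {n : ℕ} (m : ℕ) {R : Matrix (Fin n) (Fin n) ℂ} (hR : MR R = 1)
    (p : Fin n × Fin n) (k : Fin m × Fin m) :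
    TR m R p k = ((m : ℂ) ^ 2)⁻¹ * (P2FRA n m p.1 k.1 * P1FLA n m p.2 k.2) := by
  rw [TR, hR, inv_one, Matrix.one_mul, Matrix.smul_apply, smul_eq_mul, Matrix.kronecker_apply]

theorem norm_TR_apply_of_MR_eq_one {n : ℕ} (m : ℕ) {R : Matrix (Fin n) (Fin n) ℂ}
    (hR : MR R = 1) (p : Fin n × Fin n) (k : Fin m × Fin m) :
    ‖TR m R p k‖ = ((m : ℝ) ^ 2)⁻¹ := by
  rw [TR_apply_of_MR_eq_one m hR, norm_mul, norm_mul, norm_P2FRA_apply, norm_P1FLA_apply,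
    norm_inv, norm_pow, Complex.norm_natCast, mul_one, mul_one]

theorem SR_of_MR_eq_one {n : ℕ} (m : ℕ) {R : Matrix (Fin n) (Fin n) ℂ} (hR : MR R = 1)
    (k1 k2 : Fin m) : SR m R k1 k2 = (n : ℝ) ^ 2 / (m : ℝ) ^ 4 := by
  simp only [SR, norm_TR_apply_of_MR_eq_one m hR, Finset.sum_const, Finset.card_univ,
    Fintype.card_prod, Fintype.card_fin, nsmul_eq_mul]
  push_cast
  ring

theorem pinhole_scaling_factor_general
    (n m : ℕ) (k1 k2 : Fin m) :
    SR m (pinholeRef n) k1 k2 = (n : ℝ) ^ 2 / (m : ℝ) ^ 4 :=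
  SR_of_MR_eq_one m (MR_pinholeRef n) k1 k2

/-- The reference scaling factor of the pinhole reference is constant:
`S_{R_p}(k1,k2) = n²/m⁴`. -/
theorem pinhole_scaling_factor
    (n m : ℕ) (hn : 1 ≤ n) (hm : 4 * n - 1 ≤ m) (k1 k2 : Fin m) :
    SR m (pinholeRef n) k1 k2 = (n : ℝ) ^ 2 / (m : ℝ) ^ 4 :=
  pinhole_scaling_factor_general n m k1 k2
end
end

section
/- Let n ≥ 1, m ≥ 4n−1, and let R_b ∈ ℂ^{n×n} be the block reference, R_b(t1,t2) = 1 for all t1,t2. Then for all k1, k2 ∈ {0,...,m−1}, the reference scaling factor is S_{R_b}(k1,k2) = (1/m⁴)·[1 + 2(n−1)(1 − cos(2π·k1/m))]·[1 + 2(n−1)(1 − cos(2π·k2/m))]. -/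
open Complex MeasureTheory ProbabilityTheory Matrix ComplexConjugate
open scoped Kronecker

noncomputable section

/-! For the block reference `M_R = 1_L ⊗ 1_L`, whose inverse is `D_n ⊗ D_n`, so that
`T_R = m⁻² (D_n P₂F_RA^*) ⊗ (D_n P₁F_LA^*)` and each squared column norm of `T_R` is `m⁻⁴` times
the product of squared column norms of the two factors. The columns of `P₂F_RA^*` and `P₁F_LA^*`
are unimodular geometric sequences `e^{iθ(t-s)}` with `θ = 2πk/m`; `D_n` keeps their leading
entry, of modulus `1`, and replaces the other `n - 1` by first differences
`e^{iθ(t-s)} (1 - e^{-iθ})`, each of squared modulus `2 - 2 cos θ`. -/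

section DifferenceMatrix

variable {n : ℕ}

lemma Dmat_mulVec_zero (g : Fin (n + 1) → ℂ) : (Dmat (n + 1) *ᵥ g) 0 = g 0 := by
  simp [Matrix.mulVec, dotProduct, Dmat]

lemma Dmat_mulVec_succ (g : Fin (n + 1) → ℂ) (i : Fin n) :
    (Dmat (n + 1) *ᵥ g) i.succ = g i.succ - g i.castSucc := by
  have hcoeff : ∀ q : Fin (n + 1), Dmat (n + 1) i.succ q =
      (if i.succ = q then 1 else 0) - (if i.castSucc = q then 1 else 0) := by
    intro q
    simp only [Dmat, Matrix.of_apply, Fin.ext_iff, Fin.val_succ, Fin.val_castSucc]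
    split_ifs <;> first | omega | norm_num
  simp [Matrix.mulVec, dotProduct, hcoeff, sub_mul, Finset.sum_sub_distrib]

lemma Dmat_mul_oneL : Dmat n * oneL n = 1 := by
  cases n with
  | zero => exact Subsingleton.elim _ _
  | succ n =>
    ext i j
    change (Dmat (n + 1) *ᵥ fun q => oneL (n + 1) q j) i = _
    induction i using Fin.cases with
    | zero =>
      rw [Dmat_mulVec_zero]
      simp [oneL, Matrix.one_apply, eq_comm]
    | succ i =>
      rw [Dmat_mulVec_succ]
      simp only [oneL, Matrix.of_apply, Matrix.one_apply, Fin.le_def, Fin.ext_iff,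
        Fin.val_succ, Fin.val_castSucc]
      split_ifs <;> first | omega | norm_num

end DifferenceMatrix

lemma MR_blockRef (n : ℕ) : MR (blockRef n) = oneL n ⊗ₖ oneL n := by
  ext ⟨p1, p2⟩ ⟨q1, q2⟩
  simp only [MR, blockRef, zext, oneL, Matrix.kroneckerMap_apply, Matrix.of_apply, Fin.le_def]
  split_ifs <;> first | (exfalso; omega) | simp

lemma inv_MR_blockRef (n : ℕ) : (MR (blockRef n))⁻¹ = Dmat n ⊗ₖ Dmat n :=
  Matrix.inv_eq_left_inv <| by
    rw [MR_blockRef, ← Matrix.mul_kronecker_mul, Dmat_mul_oneL, Matrix.one_kronecker_one]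

lemma TR_blockRef (n m : ℕ) :
    TR m (blockRef n) = ((m : ℂ) ^ 2)⁻¹ • ((Dmat n * P2FRA n m) ⊗ₖ (Dmat n * P1FLA n m)) := by
  rw [TR, inv_MR_blockRef, Matrix.mul_kronecker_mul]

lemma sum_norm_sq_kronecker_apply {α ι ι' κ κ' : Type*} [NormedDivisionRing α]
    [Fintype ι] [Fintype ι'] (A : Matrix ι κ α) (B : Matrix ι' κ' α) (k : κ) (k' : κ') :
    ∑ p : ι × ι', ‖(A ⊗ₖ B) p (k, k')‖ ^ 2 = (∑ i, ‖A i k‖ ^ 2) * ∑ j, ‖B j k'‖ ^ 2 := by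
  simp only [Fintype.sum_prod_type, Matrix.kroneckerMap_apply, norm_mul, mul_pow,
    Finset.sum_mul_sum]

lemma norm_exp_mul_I_sub_exp_mul_I_sq (a b : ℝ) :
    ‖exp (a * I) - exp (b * I)‖ ^ 2 = 2 - 2 * Real.cos (a - b) := by
  rw [Complex.sq_norm, Complex.normSq_apply]
  simp only [Complex.sub_re, Complex.sub_im, Complex.exp_ofReal_mul_I_re,
    Complex.exp_ofReal_mul_I_im, Real.cos_sub]
  nlinarith [Real.sin_sq_add_cos_sq a, Real.sin_sq_add_cos_sq b]

lemma sum_norm_sq_Dmat_mul_apply_of_exp {n : ℕ} {κ : Type*} (P : Matrix (Fin (n + 1)) κ ℂ)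
    (k : κ) (θ s : ℝ) (hP : ∀ q, P q k = exp (↑(θ * ((q : ℕ) - s)) * I)) :
    ∑ p, ‖(Dmat (n + 1) * P) p k‖ ^ 2 = 1 + 2 * n * (1 - Real.cos θ) := by
  change ∑ p, ‖(Dmat (n + 1) *ᵥ fun q => P q k) p‖ ^ 2 = _
  have hstep : ∀ x : ℝ, θ * (x + 1 - s) - θ * (x - s) = θ := fun x => by ring
  simp only [Fin.sum_univ_succ, Dmat_mulVec_zero, Dmat_mulVec_succ, hP,
    Complex.norm_exp_ofReal_mul_I, norm_exp_mul_I_sub_exp_mul_I_sq, Fin.val_succ,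
    Fin.val_castSucc, Nat.cast_add, Nat.cast_one, hstep]
  rw [one_pow, Finset.sum_const, Finset.card_univ, Fintype.card_fin, nsmul_eq_mul]
  ring

lemma P2FRA_apply (n m : ℕ) (q : Fin n) (k : Fin m) :
    P2FRA n m q k = exp (↑(2 * Real.pi * (k : ℕ) / m * ((q : ℕ) - (2 * n - 1))) * I) := by
  simp only [P2FRA, Matrix.of_apply]
  congr 1
  push_cast
  ring

lemma P1FLA_apply (n m : ℕ) (q : Fin n) (k : Fin m) :
    P1FLA n m q k = exp (↑(2 * Real.pi * (k : ℕ) / m * ((q : ℕ) - (n - 1))) * I) := by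
  simp only [P1FLA, Matrix.of_apply]
  congr 1
  push_cast
  ring

theorem block_scaling_factor_general
    (n m : ℕ) (hn : 1 ≤ n) (k1 k2 : Fin m) :
    SR m (blockRef n) k1 k2 =
      (1 / (m : ℝ) ^ 4) *
        (1 + 2 * ((n : ℝ) - 1) * (1 - Real.cos (2 * Real.pi * ((k1 : ℕ) : ℝ) / (m : ℝ)))) *
        (1 + 2 * ((n : ℝ) - 1) * (1 - Real.cos (2 * Real.pi * ((k2 : ℕ) : ℝ) / (m : ℝ)))) := by
  obtain ⟨n, rfl⟩ := Nat.exists_eq_add_of_le' hn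
  rw [SR, TR_blockRef]
  simp only [Matrix.smul_apply, smul_eq_mul, norm_mul, mul_pow, ← Finset.mul_sum,
    sum_norm_sq_kronecker_apply,
    sum_norm_sq_Dmat_mul_apply_of_exp _ k1 _ _ (P2FRA_apply _ m · k1),
    sum_norm_sq_Dmat_mul_apply_of_exp _ k2 _ _ (P1FLA_apply _ m · k2)]
  simp only [norm_inv, norm_pow, Complex.norm_natCast, Nat.cast_add, Nat.cast_one]
  ring

/-- The reference scaling factor of the block reference is
`S_{R_b}(k1,k2) = (1/m⁴)·[1 + 2(n-1)(1-cos(2π·k1/m))]·[1 + 2(n-1)(1-cos(2π·k2/m))]`. -/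
theorem block_scaling_factor
    (n m : ℕ) (hn : 1 ≤ n) (hm : 4 * n - 1 ≤ m) (k1 k2 : Fin m) :
    SR m (blockRef n) k1 k2 =
      (1 / (m : ℝ) ^ 4) *
        (1 + 2 * ((n : ℝ) - 1) * (1 - Real.cos (2 * Real.pi * ((k1 : ℕ) : ℝ) / (m : ℝ)))) *
        (1 + 2 * ((n : ℝ) - 1) * (1 - Real.cos (2 * Real.pi * ((k2 : ℕ) : ℝ) / (m : ℝ)))) :=
  block_scaling_factor_general n m hn k1 k2
end
end

section
/- Let λ ≥ 0 and let Z be a Poisson random variable with parameter λ. Then for every real p ≥ 1, the centered moments satisfy (E|Z − λ|^p)^{1/p} ≤ 5·(√(3λ) + 2)·p. Consequently the centered Poisson variable Z − λ is sub-exponential with sub-exponential norm at most C·(√(3λ) + 2) for a universal constant C > 0. -/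
open Complex MeasureTheory ProbabilityTheory Matrix ComplexConjugate
open scoped Kronecker

noncomputable section

/-!
For `y ≥ 0` and `p > 0`, `y ^ p ≤ (p / e) ^ p * exp y` (the tangent line `e x ≤ exp x` at
`x = y / p`), so for `t > 0` the `p`-th absolute moment of any `X` is at most
`(p / (t e)) ^ p * (E exp (t X) + E exp (-t X))`. The centred Poisson variable has
`E exp (u (Z - λ)) = exp (λ (exp u - 1 - u)) ≤ exp (λ u ^ 2)` for `|u| ≤ 1`, so `t = 1 / s`
with `λ ≤ s ^ 2` gives `E |Z - λ| ^ p ≤ 2 e (s p / e) ^ p`, and hence `‖Z - λ‖_p ≤ 2 s p`;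
`s = √(3λ) + 2` is admissible.
-/

open Real
open scoped NNReal Nat

lemma rpow_le_div_exp_one_rpow_mul_exp {p y : ℝ} (hp : 0 < p) (hy : 0 ≤ y) :
    y ^ p ≤ (p / rexp 1) ^ p * rexp y := by
  have htangent : rexp 1 * (y / p) ≤ rexp (y / p) := by
    have := add_one_le_exp (y / p - 1)
    rw [Real.exp_sub, le_div_iff₀ (exp_pos 1)] at this
    linarith
  calc y ^ p = ((p / rexp 1) * (rexp 1 * (y / p))) ^ p := by congr 1; field_simp
    _ = (p / rexp 1) ^ p * (rexp 1 * (y / p)) ^ p := mul_rpow (by positivity) (by positivity)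
    _ ≤ (p / rexp 1) ^ p * rexp (y / p) ^ p := by gcongr
    _ = (p / rexp 1) ^ p * rexp y := by rw [← exp_mul, div_mul_cancel₀ _ hp.ne']

lemma abs_rpow_le_mul_exp_add_exp {p t : ℝ} (hp : 0 < p) (ht : 0 < t) (x : ℝ) :
    |x| ^ p ≤ (p / (t * rexp 1)) ^ p * (rexp (t * x) + rexp (-(t * x))) := by
  have hexp : rexp (t * |x|) ≤ rexp (t * x) + rexp (-(t * x)) := by
    rcases le_total 0 x with hx | hx
    · rw [abs_of_nonneg hx]; linarith [exp_pos (-(t * x))]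
    · rw [abs_of_nonpos hx, mul_neg]; linarith [exp_pos (t * x)]
  calc |x| ^ p = (t * |x|) ^ p / t ^ p := by
        rw [mul_rpow ht.le (abs_nonneg x)]; field_simp
    _ ≤ (p / rexp 1) ^ p * rexp (t * |x|) / t ^ p := by
        gcongr; exact rpow_le_div_exp_one_rpow_mul_exp hp (by positivity)
    _ = (p / (t * rexp 1)) ^ p * rexp (t * |x|) := by
        rw [show p / (t * rexp 1) = p / rexp 1 / t by field_simp, div_rpow (by positivity) ht.le]
        ring
    _ ≤ (p / (t * rexp 1)) ^ p * (rexp (t * x) + rexp (-(t * x))) := by gcongr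

theorem lintegral_abs_rpow_le_mul_lintegral_exp_add {α : Type*} [MeasurableSpace α]
    {μ : Measure α} {X : α → ℝ} (hX : AEMeasurable X μ) {p t : ℝ} (hp : 0 < p) (ht : 0 < t) :
    ∫⁻ a, ENNReal.ofReal (|X a| ^ p) ∂μ ≤ ENNReal.ofReal ((p / (t * rexp 1)) ^ p) *
      (∫⁻ a, ENNReal.ofReal (rexp (t * X a)) ∂μ +
        ∫⁻ a, ENNReal.ofReal (rexp (-(t * X a))) ∂μ) := by
  rw [← lintegral_add_left' (by fun_prop), ← lintegral_const_mul' _ _ ENNReal.ofReal_ne_top]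
  refine lintegral_mono fun a => ?_
  rw [← ENNReal.ofReal_add (exp_nonneg _) (exp_nonneg _), ← ENNReal.ofReal_mul (by positivity)]
  exact ENNReal.ofReal_le_ofReal (abs_rpow_le_mul_exp_add_exp hp ht (X a))

lemma hasSum_poisson_mul_exp_mul_sub (r u : ℝ) :
    HasSum (fun n : ℕ => rexp (-r) * r ^ n / n ! * rexp (u * (n - r)))
      (rexp (r * (rexp u - 1 - u))) := by
  have hexp := (NormedSpace.expSeries_div_hasSum_exp (r * rexp u)).mul_left
    (rexp (-r) * rexp (-(u * r)))
  have hterm : ∀ n : ℕ, rexp (-r) * r ^ n / n ! * rexp (u * (n - r)) =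
      rexp (-r) * rexp (-(u * r)) * ((r * rexp u) ^ n / n !) := fun n => by
    rw [mul_pow, ← Real.exp_nat_mul, show u * (n - r) = n * u + -(u * r) by ring, Real.exp_add]
    ring
  have hvalue :
      rexp (-r) * rexp (-(u * r)) * rexp (r * rexp u) = rexp (r * (rexp u - 1 - u)) := by
    rw [← Real.exp_add, ← Real.exp_add]
    ring_nf
  rw [← exp_eq_exp_ℝ, hvalue] at hexp
  simpa only [hterm] using hexp

theorem lintegral_exp_mul_sub_poissonMeasure (r : ℝ≥0) (u : ℝ) :
    ∫⁻ n, ENNReal.ofReal (rexp (u * (n - r))) ∂Po(r) =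
      ENNReal.ofReal (rexp (r * (rexp u - 1 - u))) := by
  have hsum := hasSum_poisson_mul_exp_mul_sub r u
  rw [poissonMeasure, lintegral_sum_measure, ← hsum.tsum_eq,
    ENNReal.ofReal_tsum_of_nonneg (fun n => by positivity) hsum.summable]
  refine tsum_congr fun n => ?_
  rw [lintegral_smul_measure, lintegral_dirac, smul_eq_mul, ENNReal.ofReal_mul (by positivity)]

lemma lintegral_exp_mul_sub_poissonMeasure_le (r : ℝ≥0) {u : ℝ} (hu : |u| ≤ 1)
    (hru : r * u ^ 2 ≤ 1) :
    ∫⁻ n, ENNReal.ofReal (rexp (u * (n - r))) ∂Po(r) ≤ ENNReal.ofReal (rexp 1) := by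
  rw [lintegral_exp_mul_sub_poissonMeasure]
  refine ENNReal.ofReal_le_ofReal (exp_le_exp.2 ?_)
  have := (abs_le.1 (abs_exp_sub_one_sub_id_le hu)).2
  nlinarith [r.2]

theorem integral_abs_sub_rpow_poissonMeasure_le (r : ℝ≥0) {p t : ℝ} (hp : 0 < p) (ht : 0 < t)
    (ht1 : t ≤ 1) (hrt : r * t ^ 2 ≤ 1) :
    ∫ n, |(n : ℝ) - r| ^ p ∂Po(r) ≤ 2 * rexp 1 * (p / (t * rexp 1)) ^ p := by
  have hmgf : ∀ u : ℝ, u = t ∨ u = -t →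
      ∫⁻ n, ENNReal.ofReal (rexp (u * (n - r))) ∂Po(r) ≤ ENNReal.ofReal (rexp 1) := by
    rintro u (rfl | rfl)
    · exact lintegral_exp_mul_sub_poissonMeasure_le r (by rwa [abs_of_pos ht]) hrt
    · exact lintegral_exp_mul_sub_poissonMeasure_le r (by rwa [abs_neg, abs_of_pos ht])
        (by rwa [neg_sq])
  have hlint := lintegral_abs_rpow_le_mul_lintegral_exp_add
    (X := fun n : ℕ => (n : ℝ) - r) (μ := Po(r)) (by fun_prop) hp ht
  simp only [← neg_mul] at hlint
  rw [integral_eq_lintegral_of_nonneg_ae (.of_forall fun n => by positivity)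
    (Measurable.of_discrete).aestronglyMeasurable]
  refine ENNReal.toReal_le_of_le_ofReal (by positivity) (hlint.trans ?_)
  calc _ ≤ ENNReal.ofReal ((p / (t * rexp 1)) ^ p) *
        (ENNReal.ofReal (rexp 1) + ENNReal.ofReal (rexp 1)) := by
        gcongr
        exacts [hmgf t (.inl rfl), hmgf (-t) (.inr rfl)]
    _ = ENNReal.ofReal (2 * rexp 1 * (p / (t * rexp 1)) ^ p) := by
        rw [← ENNReal.ofReal_add (by positivity) (by positivity), ← ENNReal.ofReal_mul
          (by positivity), mul_comm]
        ring_nf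

lemma rpow_one_div_le_mul_of_le_mul_rpow {A M a p : ℝ} (hA : 0 ≤ A) (hM : 1 ≤ M) (ha : 0 ≤ a)
    (hp : 1 ≤ p) (h : A ≤ M * a ^ p) : A ^ (1 / p) ≤ M * a := by
  have hp0 : 0 < p := one_pos.trans_le hp
  calc A ^ (1 / p) ≤ (M * a ^ p) ^ (1 / p) := by gcongr
    _ = M ^ (1 / p) * a := by
        rw [mul_rpow (by positivity) (by positivity), ← rpow_mul ha, mul_one_div_cancel hp0.ne',
          rpow_one]
    _ ≤ M * a := by
        gcongr
        exact rpow_le_self_of_one_le hM ((div_le_one hp0).2 hp)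

theorem rpow_integral_abs_sub_rpow_poissonMeasure_le (r : ℝ≥0) {p s : ℝ} (hp : 1 ≤ p)
    (hs : 1 ≤ s) (hrs : r ≤ s ^ 2) :
    (∫ n, |(n : ℝ) - r| ^ p ∂Po(r)) ^ (1 / p) ≤ 2 * s * p := by
  have hp0 : 0 < p := one_pos.trans_le hp
  have hs0 : 0 < s := one_pos.trans_le hs
  have hmoment := integral_abs_sub_rpow_poissonMeasure_le r hp0 (inv_pos.2 hs0)
    (inv_le_one_of_one_le₀ hs)
    (by rw [inv_pow, ← div_eq_mul_inv, div_le_one (by positivity)]; exact hrs)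
  have := rpow_one_div_le_mul_of_le_mul_rpow (integral_nonneg fun n => by positivity)
    (by linarith [add_one_le_exp 1]) (by positivity) hp hmoment
  calc _ ≤ 2 * rexp 1 * (p / (s⁻¹ * rexp 1)) := this
    _ = 2 * s * p := by field_simp

theorem hasLaw_poissonMeasure_of_measure_eq {Ω : Type*} [MeasurableSpace Ω] {μ : Measure Ω}
    {Z : Ω → ℕ} (hZ : Measurable Z) (r : ℝ≥0)
    (hpmf : ∀ n : ℕ, μ {ω | Z ω = n} = ENNReal.ofReal (rexp (-r) * r ^ n / n !)) :
    HasLaw Z Po(r) μ where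
  aemeasurable := hZ.aemeasurable
  map_eq := Measure.ext_of_singleton fun n => by
    rw [Measure.map_apply hZ (measurableSet_singleton n), poissonMeasure_singleton]
    exact hpmf n

theorem poisson_centered_moment_bound_general
    {Ω : Type*} [MeasurableSpace Ω] (μ : Measure Ω)
    (lam : ℝ) (hlam : 0 ≤ lam) (Z : Ω → ℕ) (hZ : Measurable Z)
    (hpmf : ∀ k : ℕ, μ {ω | Z ω = k} =
      ENNReal.ofReal (Real.exp (-lam) * lam ^ k / (k.factorial : ℝ))) :
    (∀ p : ℝ, 1 ≤ p →
      (∫ ω, |(Z ω : ℝ) - lam| ^ p ∂μ) ^ (1 / p) ≤ 5 * (Real.sqrt (3 * lam) + 2) * p) ∧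
    ∃ C : ℝ, 0 < C ∧ ∀ p : ℝ, 1 ≤ p →
      (∫ ω, |(Z ω : ℝ) - lam| ^ p ∂μ) ^ (1 / p) ≤ C * (Real.sqrt (3 * lam) + 2) * p := by
  set r : ℝ≥0 := ⟨lam, hlam⟩
  have hbound : ∀ p : ℝ, 1 ≤ p →
      (∫ ω, |(Z ω : ℝ) - lam| ^ p ∂μ) ^ (1 / p) ≤ 5 * (√(3 * lam) + 2) * p := by
    intro p hp
    have hlaw : ∫ ω, |(Z ω : ℝ) - lam| ^ p ∂μ = ∫ n, |(n : ℝ) - r| ^ p ∂Po(r) :=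
      (hasLaw_poissonMeasure_of_measure_eq hZ r hpmf).integral_comp
        (f := fun n : ℕ => |(n : ℝ) - r| ^ p) (Measurable.of_discrete).aestronglyMeasurable
    have hsqrt : √(3 * lam) ^ 2 = 3 * lam := sq_sqrt (by positivity)
    have h := rpow_integral_abs_sub_rpow_poissonMeasure_le r hp (s := √(3 * lam) + 2)
      (by linarith [sqrt_nonneg (3 * lam)])
      (show lam ≤ _ by nlinarith [sqrt_nonneg (3 * lam)])
    rw [hlaw]
    nlinarith [sqrt_nonneg (3 * lam)]
  exact ⟨hbound, 5, by norm_num, hbound⟩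

/-- Centered moment bound for a Poisson random variable:
`(E|Z - λ|^p)^{1/p} ≤ 5·(√(3λ) + 2)·p` for all real `p ≥ 1`; consequently `Z - λ` is
sub-exponential with sub-exponential norm at most `C·(√(3λ) + 2)` for a universal `C > 0`. -/
theorem poisson_centered_moment_bound
    {Ω : Type*} [MeasurableSpace Ω] (μ : Measure Ω) [IsProbabilityMeasure μ]
    (lam : ℝ) (hlam : 0 ≤ lam) (Z : Ω → ℕ) (hZ : Measurable Z)
    (hpmf : ∀ k : ℕ, μ {ω | Z ω = k} =
      ENNReal.ofReal (Real.exp (-lam) * lam ^ k / (k.factorial : ℝ))) :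
    (∀ p : ℝ, 1 ≤ p →
      (∫ ω, |(Z ω : ℝ) - lam| ^ p ∂μ) ^ (1 / p) ≤ 5 * (Real.sqrt (3 * lam) + 2) * p) ∧
    ∃ C : ℝ, 0 < C ∧ ∀ p : ℝ, 1 ≤ p →
      (∫ ω, |(Z ω : ℝ) - lam| ^ p ∂μ) ^ (1 / p) ≤ C * (Real.sqrt (3 * lam) + 2) * p :=
  poisson_centered_moment_bound_general μ lam hlam Z hZ hpmf
end
end
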